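/- arXiv:2108.11241 — 2 statements merged into one kernel-verified Lean document; each statement's English description precedes it below -/
import Mathlib

section
/- Let A be a commutative ring. The map sending the connected component of the vertex ∞·X (for X ∈ GL₂(A)) to the coset GE₂(A)X is a well-defined bijection from the set of connected components of the graph Γ(A) to the coset space GE₂(A)\GL₂(A), and this bijection is compatible with the right GL₂(A)-actions on both sides (right multiplication of vertices by matrices, and right multiplication of cosets). -/
/-!
Right multiplication by `M ∈ GL₂(A)` is an automorphism of `Γ(A)` and `GL₂(A)` is transitive on
vertices, so everything reduces to showing that `∞` and `∞ · Z` lie in the same component exactly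
when `Z ∈ GE₂(A)`. The generators of `GE₂(A)` move `∞` by at most two edges: lower triangular
matrices fix `∞`, and `∞ · E₁₂(a) = [1 : a]` is joined to `∞` through `0`. Conversely, the
stabiliser of `∞` consists of the lower triangular matrices, and `∞ · Z` is a neighbour of `∞`
only if `Z₀₁` is a unit; both kinds of matrices lie in `GE₂(A)`, so the coset does not change
along a path starting at `∞`.
-/

open Matrix

/-- A row `(a,b) ∈ A²` is unimodular if `∃ r s, r*a + s*b = 1`. -/
def IsUnimod {A : Type*} [CommRing A] (v : Fin 2 → A) : Prop :=
  ∃ r s : A, r * v 0 + s * v 1 = 1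

/-- Unimodular rows of length 2. -/
abbrev UnimodRow (A : Type*) [CommRing A] := {v : Fin 2 → A // IsUnimod v}

/-- Two unimodular rows are equivalent if they differ by multiplication by a unit. -/
instance vertexSetoid (A : Type*) [CommRing A] : Setoid (UnimodRow A) where
  r v w := ∃ u : Aˣ, (u : A) • v.1 = w.1
  iseqv := by
    refine ⟨fun v => ⟨1, by simp⟩, ?_, ?_⟩
    · rintro v w ⟨u, h⟩
      exact ⟨u⁻¹, by rw [← h, smul_smul, Units.inv_mul, one_smul]⟩
    · rintro v w z ⟨u, h⟩ ⟨u', h'⟩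
      exact ⟨u' * u, by rw [← h', ← h, smul_smul, ← Units.val_mul]⟩

/-- The vertices of the graph Γ(A): unimodular rows up to multiplication by a unit. -/
def Vertex (A : Type*) [CommRing A] := Quotient (vertexSetoid A)

/-- The graph Γ(A). -/
def GammaGraph (A : Type*) [CommRing A] : SimpleGraph (Vertex A) where
  Adj x y := x ≠ y ∧ ∃ v w : UnimodRow A, x = ⟦v⟧ ∧ y = ⟦w⟧ ∧
    IsUnit (v.1 0 * w.1 1 - v.1 1 * w.1 0)
  symm := ⟨by
    rintro x y ⟨hne, v, w, hx, hy, hd⟩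
    refine ⟨hne.symm, w, v, hy, hx, ?_⟩
    have h : w.1 0 * v.1 1 - w.1 1 * v.1 0 = -(v.1 0 * w.1 1 - v.1 1 * w.1 0) := by ring
    rw [h]
    exact hd.neg⟩
  loopless := ⟨fun x h => h.1 rfl⟩

theorem isUnimod_vecMul {A : Type*} [CommRing A] {v : Fin 2 → A} (h : IsUnimod v)
    (M : GL (Fin 2) A) : IsUnimod (vecMul v (M : Matrix (Fin 2) (Fin 2) A)) := by
  obtain ⟨r, s, hrs⟩ := h
  set w : Fin 2 → A := ((M⁻¹ : GL (Fin 2) A) : Matrix (Fin 2) (Fin 2) A) *ᵥ ![r, s] with hw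
  refine ⟨w 0, w 1, ?_⟩
  have h1 : vecMul v (M : Matrix (Fin 2) (Fin 2) A) ⬝ᵥ w = v ⬝ᵥ ![r, s] := by
    rw [hw, ← dotProduct_mulVec, mulVec_mulVec, Units.mul_inv, one_mulVec]
  simp only [dotProduct, Fin.sum_univ_two] at h1
  simp only [Matrix.cons_val_zero, Matrix.cons_val_one, Matrix.head_cons] at h1
  linear_combination h1 + hrs

/-- The right action of GL₂(A) on the vertices of Γ(A). -/
def vertexMul {A : Type*} [CommRing A] (x : Vertex A) (M : GL (Fin 2) A) : Vertex A :=
  Quotient.map (fun v => ⟨vecMul v.1 (M : Matrix (Fin 2) (Fin 2) A), isUnimod_vecMul v.2 M⟩)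
    (by
      rintro v w ⟨u, h⟩
      refine ⟨u, ?_⟩
      show (u : A) • (vecMul v.1 (M : Matrix (Fin 2) (Fin 2) A)) =
        vecMul w.1 (M : Matrix (Fin 2) (Fin 2) A)
      rw [← h]
      first
        | exact (Matrix.smul_vecMul _ _ _).symm
        | (ext j; simp [vecMul, dotProduct, Finset.mul_sum, mul_assoc])) x

/-- The vertex ∞ = [(1,0)]. -/
def vInf (A : Type*) [CommRing A] : Vertex A := ⟦⟨![1, 0], ⟨1, 0, by norm_num⟩⟩⟧

/-- The vertex 0 = [(0,1)]. -/
def vZero (A : Type*) [CommRing A] : Vertex A := ⟦⟨![0, 1], ⟨0, 1, by norm_num⟩⟩⟧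

/-- The vertex 1 = [(1,1)]. -/
def vOne (A : Type*) [CommRing A] : Vertex A := ⟦⟨![1, 1], ⟨1, 0, by norm_num⟩⟩⟧
open Matrix

/-- E(a) = [[a,1],[-1,0]] as an element of GL₂. -/
def Egl {A : Type*} [CommRing A] (a : A) : GL (Fin 2) A :=
  ⟨!![a, 1; -1, 0], !![0, -1; 1, a],
    by ext i j; fin_cases i <;> fin_cases j <;> simp [Matrix.mul_apply, Fin.sum_univ_two],
    by ext i j; fin_cases i <;> fin_cases j <;> simp [Matrix.mul_apply, Fin.sum_univ_two]⟩

/-- S(a) = [[a,1],[1,0]] as an element of GL₂. -/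
def Sgl {A : Type*} [CommRing A] (a : A) : GL (Fin 2) A :=
  ⟨!![a, 1; 1, 0], !![0, 1; 1, -a],
    by ext i j; fin_cases i <;> fin_cases j <;> simp [Matrix.mul_apply, Fin.sum_univ_two],
    by ext i j; fin_cases i <;> fin_cases j <;> simp [Matrix.mul_apply, Fin.sum_univ_two]⟩

/-- The elementary matrix E₁₂(a) = [[1,a],[0,1]] in GL₂. -/
def E12gl {A : Type*} [CommRing A] (a : A) : GL (Fin 2) A :=
  ⟨!![1, a; 0, 1], !![1, -a; 0, 1],
    by ext i j; fin_cases i <;> fin_cases j <;> simp [Matrix.mul_apply, Fin.sum_univ_two],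
    by ext i j; fin_cases i <;> fin_cases j <;> simp [Matrix.mul_apply, Fin.sum_univ_two]⟩

/-- The elementary matrix E₂₁(a) = [[1,0],[a,1]] in GL₂. -/
def E21gl {A : Type*} [CommRing A] (a : A) : GL (Fin 2) A :=
  ⟨!![1, 0; a, 1], !![1, 0; -a, 1],
    by ext i j; fin_cases i <;> fin_cases j <;> simp [Matrix.mul_apply, Fin.sum_univ_two],
    by ext i j; fin_cases i <;> fin_cases j <;> simp [Matrix.mul_apply, Fin.sum_univ_two]⟩

/-- GE₂(A): the subgroup of GL₂(A) generated by the elementary matrices and the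
invertible diagonal matrices. -/
def GE2 (A : Type*) [CommRing A] : Subgroup (GL (Fin 2) A) :=
  Subgroup.closure
    ({M | ∃ a : A, M = E12gl a} ∪ {M | ∃ a : A, M = E21gl a} ∪
      {M | (M : Matrix (Fin 2) (Fin 2) A) 0 1 = 0 ∧ (M : Matrix (Fin 2) (Fin 2) A) 1 0 = 0})

/-- Given `f : A → G` and a tuple `(a 0, …, a (n-1))`, the product
`f (a (n-1)) * ⋯ * f (a 1) * f (a 0)` (rightmost factor first). -/
def wordProd {A : Type*} {G : Type*} [Monoid G] (f : A → G) :
    {n : ℕ} → (Fin n → A) → G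
  | 0, _ => 1
  | n + 1, a => f (a (Fin.last n)) * wordProd f (fun j : Fin n => a j.castSucc)

section

variable {A : Type*} [CommRing A]

lemma vecMul_vecCons_one_zero (M : Matrix (Fin 2) (Fin 2) A) : vecMul ![1, 0] M = M 0 := by
  ext j; simp [vecMul, dotProduct, Fin.sum_univ_two]

lemma vecMul_cross_vecMul (v w : Fin 2 → A) (M : Matrix (Fin 2) (Fin 2) A) :
    (v ᵥ* M) 0 * (w ᵥ* M) 1 - (v ᵥ* M) 1 * (w ᵥ* M) 0 = (v 0 * w 1 - v 1 * w 0) * M.det := by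
  simp only [vecMul, dotProduct, Fin.sum_univ_two, det_fin_two]
  ring

lemma vertexMul_mk (v : UnimodRow A) (M : GL (Fin 2) A) :
    vertexMul ⟦v⟧ M = ⟦⟨v.1 ᵥ* (M : Matrix (Fin 2) (Fin 2) A), isUnimod_vecMul v.2 M⟩⟧ :=
  rfl

lemma vertexMul_one (x : Vertex A) : vertexMul x 1 = x := by
  induction x using Quotient.ind with
  | _ v => exact Quotient.sound ⟨1, by simp⟩

lemma vertexMul_mul (x : Vertex A) (M N : GL (Fin 2) A) :
    vertexMul x (M * N) = vertexMul (vertexMul x M) N := by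
  induction x using Quotient.ind with
  | _ v => exact Quotient.sound ⟨1, by simp [vecMul_vecMul]⟩

lemma vertexMul_vertexMul_inv (x : Vertex A) (M : GL (Fin 2) A) :
    vertexMul (vertexMul x M) M⁻¹ = x := by
  rw [← vertexMul_mul, mul_inv_cancel, vertexMul_one]

lemma vertexMul_vInf_eq_mk_iff (Z : GL (Fin 2) A) (w : UnimodRow A) :
    vertexMul (vInf A) Z = ⟦w⟧ ↔ ∃ u : Aˣ, (u : A) • (Z : Matrix (Fin 2) (Fin 2) A) 0 = w.1 := by
  refine Quotient.eq.trans ?_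
  show (∃ u : Aˣ, (u : A) • (![1, 0] ᵥ* (Z : Matrix (Fin 2) (Fin 2) A)) = w.1) ↔ _
  rw [vecMul_vecCons_one_zero]

lemma exists_vertexMul_vInf_eq (x : Vertex A) : ∃ X : GL (Fin 2) A, vertexMul (vInf A) X = x := by
  induction x using Quotient.ind with
  | _ v =>
    obtain ⟨r, s, hrs⟩ := v.2
    have hdet : IsUnit (!![v.1 0, v.1 1; -s, r] : Matrix (Fin 2) (Fin 2) A).det := by
      rw [det_fin_two_of, show v.1 0 * r - v.1 1 * -s = 1 by linear_combination hrs]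
      exact isUnit_one
    refine ⟨nonsingInvUnit _ hdet, (vertexMul_vInf_eq_mk_iff _ _).2 ⟨1, ?_⟩⟩
    ext j; fin_cases j <;> simp [nonsingInvUnit]

lemma vertexMul_vInf_eq_vInf_iff (Z : GL (Fin 2) A) :
    vertexMul (vInf A) Z = vInf A ↔ (Z : Matrix (Fin 2) (Fin 2) A) 0 1 = 0 := by
  refine (vertexMul_vInf_eq_mk_iff Z ⟨![1, 0], 1, 0, by simp⟩).trans ?_
  constructor
  · rintro ⟨u, hu⟩
    simpa using congrFun hu 1
  · intro h
    have hdet := isUnits_det_units Z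
    rw [det_fin_two, h, zero_mul, sub_zero] at hdet
    obtain ⟨u, hu⟩ := isUnit_of_mul_isUnit_left hdet
    refine ⟨u⁻¹, ?_⟩
    ext j; fin_cases j <;> simp [← hu, h]

namespace GammaGraph

lemma reachable_mk_of_isUnit (v w : UnimodRow A) (h : IsUnit (v.1 0 * w.1 1 - v.1 1 * w.1 0)) :
    (GammaGraph A).Reachable ⟦v⟧ ⟦w⟧ := by
  by_cases hvw : (⟦v⟧ : Vertex A) = ⟦w⟧
  · exact hvw ▸ SimpleGraph.Reachable.refl _
  · exact SimpleGraph.Adj.reachable ⟨hvw, v, w, rfl, rfl, h⟩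

lemma adj_vertexMul {x y : Vertex A} (h : (GammaGraph A).Adj x y) (M : GL (Fin 2) A) :
    (GammaGraph A).Adj (vertexMul x M) (vertexMul y M) := by
  obtain ⟨hxy, v, w, rfl, rfl, hvw⟩ := h
  refine ⟨fun h => hxy ?_, _, _, vertexMul_mk v M, vertexMul_mk w M, ?_⟩
  · rw [← vertexMul_vertexMul_inv ⟦v⟧ M, h]
    exact vertexMul_vertexMul_inv (⟦w⟧ : Vertex A) M
  · rw [vecMul_cross_vecMul]
    exact hvw.mul (isUnits_det_units M)

lemma reachable_vertexMul_iff {x y : Vertex A} (M : GL (Fin 2) A) :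
    (GammaGraph A).Reachable (vertexMul x M) (vertexMul y M) ↔ (GammaGraph A).Reachable x y := by
  have key : ∀ {x y : Vertex A} (M : GL (Fin 2) A), (GammaGraph A).Reachable x y →
      (GammaGraph A).Reachable (vertexMul x M) (vertexMul y M) :=
    fun M h => h.map ⟨fun x => vertexMul x M, fun h => adj_vertexMul h M⟩
  refine ⟨fun h => ?_, key M⟩
  simpa only [vertexMul_vertexMul_inv] using key M⁻¹ h

lemma isUnit_of_adj_vInf {Z : GL (Fin 2) A}
    (h : (GammaGraph A).Adj (vInf A) (vertexMul (vInf A) Z)) :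
    IsUnit ((Z : Matrix (Fin 2) (Fin 2) A) 0 1) := by
  obtain ⟨-, v, w, hv, hw, hvw⟩ := h
  obtain ⟨u, hu⟩ := (vertexMul_vInf_eq_mk_iff 1 v).1 (by rw [vertexMul_one, hv])
  obtain ⟨u', hu'⟩ := (vertexMul_vInf_eq_mk_iff Z w).1 hw
  simp only [← hu, ← hu', Units.val_one, one_apply_eq, one_apply_ne zero_ne_one,
    Pi.smul_apply, smul_eq_mul, mul_one, mul_zero, zero_mul, sub_zero] at hvw
  exact isUnit_of_mul_isUnit_right (isUnit_of_mul_isUnit_right hvw)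

end GammaGraph

lemma E12gl_mem_GE2 (a : A) : E12gl a ∈ GE2 A :=
  Subgroup.subset_closure (Or.inl (Or.inl ⟨a, rfl⟩))

lemma E21gl_mem_GE2 (a : A) : E21gl a ∈ GE2 A :=
  Subgroup.subset_closure (Or.inl (Or.inr ⟨a, rfl⟩))

lemma mem_GE2_of_diagonal {D : GL (Fin 2) A} (h01 : (D : Matrix (Fin 2) (Fin 2) A) 0 1 = 0)
    (h10 : (D : Matrix (Fin 2) (Fin 2) A) 1 0 = 0) : D ∈ GE2 A :=
  Subgroup.subset_closure (Or.inr ⟨h01, h10⟩)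

lemma Egl_zero_mem_GE2 : Egl (0 : A) ∈ GE2 A := by
  have h : Egl (0 : A) = E12gl 1 * E21gl (-1) * E12gl 1 := by
    ext i j; fin_cases i <;> fin_cases j <;> simp [Egl, E12gl, E21gl, mul_apply, Fin.sum_univ_two]
  rw [h]
  exact mul_mem (mul_mem (E12gl_mem_GE2 1) (E21gl_mem_GE2 (-1))) (E12gl_mem_GE2 1)

lemma mem_GE2_of_apply_zero_one_eq_zero {Z : GL (Fin 2) A}
    (h : (Z : Matrix (Fin 2) (Fin 2) A) 0 1 = 0) : Z ∈ GE2 A := by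
  have hdet := isUnits_det_units Z
  rw [det_fin_two, h, zero_mul, sub_zero] at hdet
  obtain ⟨d, hd⟩ := isUnit_of_mul_isUnit_right hdet
  set t := -(((d⁻¹ : Aˣ) : A) * (Z : Matrix (Fin 2) (Fin 2) A) 1 0)
  have hdiag : Z * E21gl t ∈ GE2 A := by
    refine mem_GE2_of_diagonal ?_ ?_ <;>
      simp [t, E21gl, mul_apply, Fin.sum_univ_two, h, ← hd]
  exact (Subgroup.mul_mem_cancel_right _ (E21gl_mem_GE2 t)).1 hdiag

lemma mem_GE2_of_isUnit_apply_zero_one {Z : GL (Fin 2) A}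
    (h : IsUnit ((Z : Matrix (Fin 2) (Fin 2) A) 0 1)) : Z ∈ GE2 A := by
  obtain ⟨b, hb⟩ := h
  set t := ((b⁻¹ : Aˣ) : A) * (Z : Matrix (Fin 2) (Fin 2) A) 0 0
  have hlower : Z * Egl 0 * E12gl t ∈ GE2 A := by
    apply mem_GE2_of_apply_zero_one_eq_zero
    simp [t, Egl, E12gl, mul_apply, Fin.sum_univ_two, ← hb]
  rwa [Subgroup.mul_mem_cancel_right _ (E12gl_mem_GE2 t),
    Subgroup.mul_mem_cancel_right _ Egl_zero_mem_GE2] at hlower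

lemma reachable_vInf_vertexMul_of_mem_GE2 {Z : GL (Fin 2) A} (h : Z ∈ GE2 A) :
    (GammaGraph A).Reachable (vInf A) (vertexMul (vInf A) Z) := by
  induction h using Subgroup.closure_induction with
  | mem E hE =>
    rcases hE with (⟨a, rfl⟩ | ⟨a, rfl⟩) | ⟨h01, -⟩
    · -- `∞ — 0 — ∞ · E₁₂(a)`
      refine (GammaGraph.reachable_mk_of_isUnit _ ⟨![0, 1], 0, 1, by simp⟩ (by simp)).trans
        (GammaGraph.reachable_mk_of_isUnit _ _ ?_)
      simp [E12gl]
    · rw [(vertexMul_vInf_eq_vInf_iff _).2 (by simp [E21gl])]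
    · rw [(vertexMul_vInf_eq_vInf_iff _).2 h01]
  | one => rw [vertexMul_one]
  | mul M N _ _ hM hN =>
    rw [vertexMul_mul]
    exact hN.trans ((GammaGraph.reachable_vertexMul_iff N).2 hM)
  | inv M _ hM =>
    have := (GammaGraph.reachable_vertexMul_iff M⁻¹).2 hM
    rw [vertexMul_vertexMul_inv] at this
    exact this.symm

lemma mem_GE2_of_reachable_vInf_vertexMul {Z : GL (Fin 2) A}
    (h : (GammaGraph A).Reachable (vInf A) (vertexMul (vInf A) Z)) : Z ∈ GE2 A := by
  suffices ∀ y, (GammaGraph A).Reachable (vInf A) y →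
      ∀ Z : GL (Fin 2) A, vertexMul (vInf A) Z = y → Z ∈ GE2 A from this _ h Z rfl
  intro y hy
  rw [SimpleGraph.reachable_iff_reflTransGen] at hy
  induction hy with
  | refl =>
    exact fun Z hZ => mem_GE2_of_apply_zero_one_eq_zero ((vertexMul_vInf_eq_vInf_iff Z).1 hZ)
  | @tail b _ _ hadj ih =>
    rintro Z rfl
    obtain ⟨B, rfl⟩ := exists_vertexMul_vInf_eq b
    have hstep : Z * B⁻¹ ∈ GE2 A := by
      apply mem_GE2_of_isUnit_apply_zero_one
      apply GammaGraph.isUnit_of_adj_vInf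
      simpa only [vertexMul_vertexMul_inv, vertexMul_mul] using
        GammaGraph.adj_vertexMul hadj B⁻¹
    simpa using mul_mem hstep (ih B rfl)

lemma connectedComponentMk_vertexMul_vInf_eq_iff (X Y : GL (Fin 2) A) :
    (GammaGraph A).connectedComponentMk (vertexMul (vInf A) X) =
        (GammaGraph A).connectedComponentMk (vertexMul (vInf A) Y) ↔ Y * X⁻¹ ∈ GE2 A := by
  rw [SimpleGraph.ConnectedComponent.eq, ← GammaGraph.reachable_vertexMul_iff X⁻¹,
    vertexMul_vertexMul_inv, ← vertexMul_mul]
  exact ⟨mem_GE2_of_reachable_vInf_vertexMul, reachable_vInf_vertexMul_of_mem_GE2⟩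

variable (A) in
def cosetToComponent :
    Quotient (QuotientGroup.rightRel (GE2 A)) → (GammaGraph A).ConnectedComponent :=
  Quotient.lift (fun X => (GammaGraph A).connectedComponentMk (vertexMul (vInf A) X))
    fun X Y h =>
      (connectedComponentMk_vertexMul_vInf_eq_iff X Y).2 (QuotientGroup.rightRel_apply.1 h)

lemma cosetToComponent_bijective : Function.Bijective (cosetToComponent A) := by
  constructor
  · intro p q
    induction p, q using Quotient.inductionOn₂ with
    | _ X Y => exact fun h => Quotient.sound (QuotientGroup.rightRel_apply.2
        ((connectedComponentMk_vertexMul_vInf_eq_iff X Y).1 h))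
  · intro C
    induction C using SimpleGraph.ConnectedComponent.ind with
    | _ x =>
      obtain ⟨X, rfl⟩ := exists_vertexMul_vInf_eq x
      exact ⟨⟦X⟧, rfl⟩

end

/-- The map sending the connected component of ∞·X to the coset GE₂(A)X is a
well-defined bijection from the set of connected components of Γ(A) to GE₂(A)\GL₂(A),
compatible with the right GL₂(A)-actions. -/
theorem stmt6 (A : Type*) [CommRing A] :
    ∃ f : (GammaGraph A).ConnectedComponent →
        Quotient (QuotientGroup.rightRel (GE2 A)),
      Function.Bijective f ∧
      (∀ X : GL (Fin 2) A,
        f ((GammaGraph A).connectedComponentMk (vertexMul (vInf A) X)) =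
          Quotient.mk (QuotientGroup.rightRel (GE2 A)) X) ∧
      (∀ (X M : GL (Fin 2) A),
        f ((GammaGraph A).connectedComponentMk (vertexMul (vertexMul (vInf A) X) M)) =
          Quotient.mk (QuotientGroup.rightRel (GE2 A)) (X * M)) := by
  let e := Equiv.ofBijective _ (cosetToComponent_bijective (A := A))
  refine ⟨e.symm, e.symm.bijective, fun X => e.symm_apply_eq.2 rfl, fun X M => ?_⟩
  rw [← vertexMul_mul]
  exact e.symm_apply_eq.2 rfl
end

section
/- Let A be a commutative ring. The subset 𝔹 := { β(u,a) : u ∈ A^×, a ∈ A } of C(A), where β(u,a) := h(u)y(ua), is a subgroup of C(A), and the homomorphism ψ: C(A) → SL₂(A) restricts to a group isomorphism from 𝔹 onto the group B of lower-triangular matrices in SL₂(A). -/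
open Matrix

/-- The word `h(u) = ε(-u)ε(-u⁻¹)ε(-u)` in the free group on the symbols `ε(a)`, `a ∈ A`. -/
def hFree {A : Type*} [CommRing A] (u : Aˣ) : FreeGroup A :=
  FreeGroup.of (-(u : A)) * FreeGroup.of (-((u⁻¹ : Aˣ) : A)) * FreeGroup.of (-(u : A))

/-- The defining relations of Cohn's group C(A). -/
def CRels (A : Type*) [CommRing A] : Set (FreeGroup A) :=
  {x | ∃ u v : Aˣ, x = hFree u * hFree v * (hFree (u * v))⁻¹} ∪
  {x | ∃ a b : A, x = FreeGroup.of a * FreeGroup.of (0 : A) * FreeGroup.of b *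
      (hFree (-1) * FreeGroup.of (a + b))⁻¹} ∪
  {x | ∃ (u : Aˣ) (a : A), x = hFree u * FreeGroup.of a * hFree u *
      (FreeGroup.of ((u : A) ^ 2 * a))⁻¹}

/-- Cohn's group C(A), presented by generators ε(a), a ∈ A, and the three families of
relations h(u)h(v) = h(uv), ε(a)ε(0)ε(b) = h(-1)ε(a+b), h(u)ε(a)h(u) = ε(u²a). -/
abbrev CGroup (A : Type*) [CommRing A] := PresentedGroup (CRels A)

/-- The generator ε(a) of C(A). -/
def epsC {A : Type*} [CommRing A] (a : A) : CGroup A := PresentedGroup.of a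

/-- h(u) = ε(-u)ε(-u⁻¹)ε(-u) in C(A). -/
def hC {A : Type*} [CommRing A] (u : Aˣ) : CGroup A :=
  epsC (-(u : A)) * epsC (-((u⁻¹ : Aˣ) : A)) * epsC (-(u : A))

/-- y(a) = ε(0)³ε(a) in C(A). -/
def yC {A : Type*} [CommRing A] (a : A) : CGroup A := (epsC (0 : A)) ^ 3 * epsC a

/-- ȳ(a) = ε(-a)ε(0)³ in C(A). -/
def ybarC {A : Type*} [CommRing A] (a : A) : CGroup A := epsC (-a) * (epsC (0 : A)) ^ 3

/-- β(u,a) = h(u)y(ua) in C(A). -/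
def betaC {A : Type*} [CommRing A] (u : Aˣ) (a : A) : CGroup A := hC u * yC ((u : A) * a)

/-- E(a) = [[a,1],[-1,0]] as an element of SL₂. -/
def ESL {A : Type*} [CommRing A] (a : A) : Matrix.SpecialLinearGroup (Fin 2) A :=
  ⟨!![a, 1; -1, 0], by simp [Matrix.det_fin_two_of]⟩

/-- D(u) = diag(u, u⁻¹) as an element of SL₂. -/
def DSL {A : Type*} [CommRing A] (u : Aˣ) : Matrix.SpecialLinearGroup (Fin 2) A :=
  ⟨!![(u : A), 0; 0, ((u⁻¹ : Aˣ) : A)], by simp [Matrix.det_fin_two_of]⟩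

theorem ESL_h {A : Type*} [CommRing A] (u : Aˣ) :
    ESL (-(u : A)) * ESL (-((u⁻¹ : Aˣ) : A)) * ESL (-(u : A)) = DSL u := by
  apply Subtype.ext
  show (!![-(u:A), 1; -1, 0] * !![-((u⁻¹:Aˣ):A), 1; -1, 0]) * !![-(u:A), 1; -1, 0] = _
  ext i j
  fin_cases i <;> fin_cases j <;>
    simp [DSL, Matrix.mul_apply, Fin.sum_univ_two]

theorem DSL_mul {A : Type*} [CommRing A] (u v : Aˣ) : DSL u * DSL v = DSL (u * v) := by
  apply Subtype.ext
  show (!![(u:A), 0; 0, ((u⁻¹:Aˣ):A)] * !![(v:A), 0; 0, ((v⁻¹:Aˣ):A)]) = _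
  ext i j
  fin_cases i <;> fin_cases j <;>
    simp [DSL, Matrix.mul_apply, Fin.sum_univ_two, mul_comm]

theorem ESL_rel2 {A : Type*} [CommRing A] (a b : A) :
    ESL a * ESL (0 : A) * ESL b = DSL (-1) * ESL (a + b) := by
  apply Subtype.ext
  show (!![a, 1; -1, 0] * !![(0:A), 1; -1, 0]) * !![b, 1; -1, 0] =
    !![((-1:Aˣ):A), 0; 0, (((-1:Aˣ)⁻¹:Aˣ):A)] * !![a + b, 1; -1, 0]
  ext i j
  fin_cases i <;> fin_cases j <;>
    simp [DSL, ESL, Matrix.mul_apply, Fin.sum_univ_two] <;> ring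

theorem ESL_rel3 {A : Type*} [CommRing A] (u : Aˣ) (a : A) :
    DSL u * ESL a * DSL u = ESL ((u : A) ^ 2 * a) := by
  apply Subtype.ext
  show (!![(u:A), 0; 0, ((u⁻¹:Aˣ):A)] * !![a, 1; -1, 0]) * !![(u:A), 0; 0, ((u⁻¹:Aˣ):A)] = _
  ext i j
  fin_cases i <;> fin_cases j <;>
    simp [ESL, Matrix.mul_apply, Fin.sum_univ_two] <;> ring

theorem lift_hFree {A : Type*} [CommRing A] (u : Aˣ) :
    FreeGroup.lift (fun a : A => ESL a) (hFree u) = DSL u := by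
  simp only [hFree, _root_.map_mul, FreeGroup.lift_apply_of]
  exact ESL_h u

theorem CRels_liftable {A : Type*} [CommRing A] :
    ∀ r ∈ CRels A, FreeGroup.lift (fun a : A => ESL a) r = 1 := by
  rintro r ((⟨u, v, rfl⟩ | ⟨a, b, rfl⟩) | ⟨u, a, rfl⟩)
  · rw [_root_.map_mul, _root_.map_mul, map_inv, lift_hFree, lift_hFree, lift_hFree, DSL_mul,
      mul_inv_cancel]
  · simp only [_root_.map_mul, map_inv, FreeGroup.lift_apply_of, lift_hFree]
    rw [ESL_rel2, mul_inv_cancel]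
  · simp only [_root_.map_mul, map_inv, FreeGroup.lift_apply_of, lift_hFree]
    rw [ESL_rel3, mul_inv_cancel]

/-- The homomorphism ψ : C(A) → SL₂(A) with ψ(ε(a)) = E(a). -/
def psiC (A : Type*) [CommRing A] : CGroup A →* Matrix.SpecialLinearGroup (Fin 2) A :=
  PresentedGroup.toGroup CRels_liftable

@[simp] theorem psiC_epsC {A : Type*} [CommRing A] (a : A) : psiC A (epsC a) = ESL a :=
  PresentedGroup.toGroup.of _


/-!
The element ε(0)² = h(−1) has order 2 and commutes with every ε(a), which turns the second
relation into ε(a)ε(0)³ε(b) = ε(a+b): the words y(a) form a copy of (A, +), normalised by the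
h(u) through y(a)h(u) = h(u)y(u²a). Hence β(u,a)β(v,b) = β(uv, va + u⁻¹b), so the β(u,a) form
a subgroup. Under ψ, h(u) goes to diag(u, u⁻¹) and y(a) to [[1,0],[a,1]], so ψ(β(u,a)) is
[[u,0],[a,u⁻¹]], and (u, a) ↦ [[u,0],[a,u⁻¹]] is a bijection from Aˣ × A onto B.
-/

section CohnGroup

variable {A : Type*} [CommRing A]

theorem mk_of_eq_epsC (a : A) : PresentedGroup.mk (CRels A) (FreeGroup.of a) = epsC a := rfl

theorem mk_hFree_eq_hC (u : Aˣ) : PresentedGroup.mk (CRels A) (hFree u) = hC u := by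
  simp only [hFree, hC, map_mul, mk_of_eq_epsC]

theorem hC_mul (u v : Aˣ) : hC u * hC v = hC (u * v) := by
  have h := PresentedGroup.mk_eq_mk_of_mul_inv_mem (rels := CRels A) (x := hFree u * hFree v)
    (y := hFree (u * v)) (Or.inl (Or.inl ⟨u, v, rfl⟩))
  simpa only [map_mul, mk_hFree_eq_hC, mk_of_eq_epsC] using h

theorem epsC_mul_epsC_zero_mul_epsC (a b : A) :
    epsC a * epsC 0 * epsC b = hC (-1) * epsC (a + b) := by
  have h := PresentedGroup.mk_eq_mk_of_mul_inv_mem (rels := CRels A)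
    (x := FreeGroup.of a * FreeGroup.of (0 : A) * FreeGroup.of b)
    (y := hFree (-1) * FreeGroup.of (a + b)) (Or.inl (Or.inr ⟨a, b, rfl⟩))
  simpa only [map_mul, mk_hFree_eq_hC, mk_of_eq_epsC] using h

theorem hC_mul_epsC_mul_hC (u : Aˣ) (a : A) :
    hC u * epsC a * hC u = epsC ((u : A) ^ 2 * a) := by
  have h := PresentedGroup.mk_eq_mk_of_mul_inv_mem (rels := CRels A)
    (x := hFree u * FreeGroup.of a * hFree u)
    (y := FreeGroup.of ((u : A) ^ 2 * a)) (Or.inr ⟨u, a, rfl⟩)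
  simpa only [map_mul, mk_hFree_eq_hC, mk_of_eq_epsC] using h

theorem hC_one : hC (1 : Aˣ) = 1 :=
  mul_eq_left.mp (by rw [hC_mul, mul_one] : hC (1 : Aˣ) * hC 1 = hC 1)

theorem hC_inv (u : Aˣ) : (hC u)⁻¹ = hC u⁻¹ :=
  inv_eq_of_mul_eq_one_right (by rw [hC_mul, mul_inv_cancel, hC_one])

theorem hC_neg_one_mul_self : hC (-1 : Aˣ) * hC (-1) = 1 := by
  rw [hC_mul, neg_one_mul, neg_neg, hC_one]

theorem epsC_mul_hC (a : A) (u : Aˣ) : epsC a * hC u = hC u⁻¹ * epsC ((u : A) ^ 2 * a) := by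
  rw [← hC_inv, eq_inv_mul_iff_mul_eq, ← mul_assoc, hC_mul_epsC_mul_hC]

theorem epsC_zero_sq : epsC (0 : A) ^ 2 = hC (-1) := by
  have h := epsC_mul_epsC_zero_mul_epsC (0 : A) 0
  rw [add_zero] at h
  exact sq (epsC (0 : A)) ▸ mul_right_cancel h

theorem epsC_mul_epsC_zero_pow_three_mul (a b : A) :
    epsC a * epsC 0 ^ 3 * epsC b = epsC (a + b) := by
  have hcomm : epsC a * hC (-1) = hC (-1) * epsC a := by simp [epsC_mul_hC]
  calc epsC a * epsC 0 ^ 3 * epsC b = epsC a * hC (-1) * (epsC 0 * epsC b) := by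
        rw [pow_succ, epsC_zero_sq]; group
    _ = hC (-1) * (hC (-1) * epsC (a + b)) := by
        rw [hcomm, ← epsC_mul_epsC_zero_mul_epsC]; group
    _ = epsC (a + b) := by rw [← mul_assoc, hC_neg_one_mul_self, one_mul]

theorem yC_add (a b : A) : yC a * yC b = yC (a + b) := by
  rw [yC, yC, yC, ← epsC_mul_epsC_zero_pow_three_mul a b]
  group

theorem yC_zero : yC (0 : A) = 1 := by
  have h : yC (0 : A) = epsC 0 ^ 2 * epsC 0 ^ 2 := by rw [yC]; group
  rw [h, epsC_zero_sq, hC_neg_one_mul_self]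

theorem yC_mul_hC (a : A) (u : Aˣ) : yC a * hC u = hC u * yC ((u : A) ^ 2 * a) := by
  have hzero : ∀ v : Aˣ, epsC 0 * hC v = hC v⁻¹ * epsC 0 := fun v => by
    rw [epsC_mul_hC, mul_zero]
  calc yC a * hC u = epsC 0 * (epsC 0 * (epsC 0 * hC u⁻¹)) * epsC ((u : A) ^ 2 * a) := by
        rw [yC, pow_three, mul_assoc, epsC_mul_hC]; group
    _ = hC u * yC ((u : A) ^ 2 * a) := by
        rw [yC, pow_three]; simp only [hzero, inv_inv, ← mul_assoc]

theorem betaC_mul (u v : Aˣ) (a b : A) :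
    betaC u a * betaC v b = betaC (u * v) ((v : A) * a + ((u⁻¹ : Aˣ) : A) * b) := by
  have hcoeff : ((u * v : Aˣ) : A) * ((v : A) * a + ((u⁻¹ : Aˣ) : A) * b) =
      (v : A) ^ 2 * ((u : A) * a) + (v : A) * b := by
    rw [Units.val_mul]
    linear_combination (v : A) * b * Units.mul_inv u
  calc betaC u a * betaC v b = hC u * (yC ((u : A) * a) * hC v) * yC ((v : A) * b) := by
        simp only [betaC, mul_assoc]
    _ = hC (u * v) * yC ((v : A) ^ 2 * ((u : A) * a) + (v : A) * b) := by
        rw [yC_mul_hC, ← hC_mul, ← yC_add]; group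
    _ = betaC (u * v) ((v : A) * a + ((u⁻¹ : Aˣ) : A) * b) := by rw [betaC, hcoeff]

theorem betaC_one_zero : betaC (1 : Aˣ) (0 : A) = 1 := by
  rw [betaC, hC_one, one_mul, mul_zero, yC_zero]

theorem betaC_inv (u : Aˣ) (a : A) : (betaC u a)⁻¹ = betaC u⁻¹ (-a) :=
  inv_eq_of_mul_eq_one_right (by rw [betaC_mul, ← mul_add, add_neg_cancel, mul_zero,
    mul_inv_cancel, betaC_one_zero])

variable (A) in
def betaSubgroup : Subgroup (CGroup A) where
  carrier := {x | ∃ (u : Aˣ) (a : A), x = betaC u a}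
  one_mem' := ⟨1, 0, betaC_one_zero.symm⟩
  mul_mem' := by
    rintro _ _ ⟨u, a, rfl⟩ ⟨v, b, rfl⟩
    exact ⟨u * v, _, betaC_mul u v a b⟩
  inv_mem' := by
    rintro _ ⟨u, a, rfl⟩
    exact ⟨u⁻¹, -a, betaC_inv u a⟩

end CohnGroup

section LowerTriangular

open scoped MatrixGroups

variable {A : Type*} [CommRing A]

def lowerSL (u : Aˣ) (a : A) : SL(2, A) :=
  ⟨!![(u : A), 0; a, ((u⁻¹ : Aˣ) : A)], by simp [det_fin_two_of]⟩

@[simp]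
theorem coe_lowerSL (u : Aˣ) (a : A) :
    (lowerSL u a : Matrix (Fin 2) (Fin 2) A) = !![(u : A), 0; a, ((u⁻¹ : Aˣ) : A)] :=
  rfl

@[simp]
theorem coe_ESL (a : A) : (ESL a : Matrix (Fin 2) (Fin 2) A) = !![a, 1; -1, 0] :=
  rfl

@[simp]
theorem coe_DSL (u : Aˣ) :
    (DSL u : Matrix (Fin 2) (Fin 2) A) = !![(u : A), 0; 0, ((u⁻¹ : Aˣ) : A)] :=
  rfl

theorem lowerSL_inj {u v : Aˣ} {a b : A} : lowerSL u a = lowerSL v b ↔ u = v ∧ a = b := by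
  refine ⟨fun h => ⟨Units.ext ?_, ?_⟩, fun ⟨hu, ha⟩ => hu ▸ ha ▸ rfl⟩
  · exact congrArg (fun S : SL(2, A) => (S : Matrix (Fin 2) (Fin 2) A) 0 0) h
  · exact congrArg (fun S : SL(2, A) => (S : Matrix (Fin 2) (Fin 2) A) 1 0) h

theorem exists_lowerSL_eq {S : SL(2, A)} (hS : (S : Matrix (Fin 2) (Fin 2) A) 0 1 = 0) :
    ∃ (u : Aˣ) (a : A), lowerSL u a = S := by
  have hdet : (S : Matrix (Fin 2) (Fin 2) A) 0 0 * (S : Matrix (Fin 2) (Fin 2) A) 1 1 = 1 := by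
    have h := S.det_coe
    rwa [det_fin_two, hS, zero_mul, sub_zero] at h
  refine ⟨Units.mkOfMulEqOne _ _ hdet, (S : Matrix (Fin 2) (Fin 2) A) 1 0, ?_⟩
  ext i j
  fin_cases i <;> fin_cases j
  · rfl
  · exact hS.symm
  · rfl
  · exact Units.inv_eq_of_mul_eq_one_right hdet

variable (A) in
def lowerTriangularSubgroup : Subgroup SL(2, A) where
  carrier := {S | (S : Matrix (Fin 2) (Fin 2) A) 0 1 = 0}
  one_mem' := by simp
  mul_mem' {S T} hS hT := by
    simp_all [Matrix.mul_apply, Fin.sum_univ_two]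
  inv_mem' {S} hS := by
    simp_all [Matrix.SpecialLinearGroup.coe_inv, adjugate_fin_two]

theorem psiC_hC (u : Aˣ) : psiC A (hC u) = DSL u := by
  simp only [hC, map_mul, psiC_epsC]
  exact ESL_h u

theorem psiC_yC (a : A) : psiC A (yC a) = lowerSL 1 a := by
  rw [yC, map_mul, map_pow, psiC_epsC, psiC_epsC]
  ext i j
  fin_cases i <;> fin_cases j <;> simp [pow_three, Matrix.mul_apply, Fin.sum_univ_two]

theorem psiC_betaC (u : Aˣ) (a : A) : psiC A (betaC u a) = lowerSL u a := by
  rw [betaC, map_mul, psiC_hC, psiC_yC]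
  ext i j
  fin_cases i <;> fin_cases j <;> simp [Matrix.mul_apply, Fin.sum_univ_two]

end LowerTriangular

/-- The subset 𝔹 = {β(u,a)} of C(A) is a subgroup, and ψ restricts to a
group isomorphism from 𝔹 onto the group B of lower-triangular matrices in SL₂(A). -/
theorem stmt12 (A : Type*) [CommRing A] :
    (∃ H : Subgroup (CGroup A),
      (H : Set (CGroup A)) = {x | ∃ (u : Aˣ) (a : A), x = betaC u a}) ∧
    (∃ B : Subgroup (Matrix.SpecialLinearGroup (Fin 2) A),
      (B : Set (Matrix.SpecialLinearGroup (Fin 2) A)) =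
        {S : Matrix.SpecialLinearGroup (Fin 2) A | (S : Matrix (Fin 2) (Fin 2) A) 0 1 = 0}) ∧
    Set.BijOn (psiC A) {x | ∃ (u : Aˣ) (a : A), x = betaC u a}
      {S : Matrix.SpecialLinearGroup (Fin 2) A | (S : Matrix (Fin 2) (Fin 2) A) 0 1 = 0} := by
  refine ⟨⟨betaSubgroup A, rfl⟩, ⟨lowerTriangularSubgroup A, rfl⟩, ?mapsTo, ?injOn, ?surjOn⟩
  case mapsTo =>
    rintro _ ⟨u, a, rfl⟩
    simp [psiC_betaC]
  case injOn =>
    rintro _ ⟨u, a, rfl⟩ _ ⟨v, b, rfl⟩ h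
    rw [psiC_betaC, psiC_betaC, lowerSL_inj] at h
    obtain ⟨rfl, rfl⟩ := h
    rfl
  case surjOn =>
    intro S hS
    obtain ⟨u, a, rfl⟩ := exists_lowerSL_eq hS
    exact ⟨betaC u a, ⟨u, a, rfl⟩, psiC_betaC u a⟩
end
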